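/- arXiv:1904.07136 — 11 statements merged into one kernel-verified Lean document; each statement's English description precedes it below -/
import Mathlib

section
/- The relation ⊥_ω is a compatibility relation on the PCM of histories. In particular it is associative: if x ⊥_ω y and (x ⊎ y) ⊥_ω z, then x ⊥_ω (y ⊎ z) and y ⊥_ω z. -/
/-- A partial commutative monoid structure: a partial binary operation
(encoded with `Option`) together with a unit element. -/
structure PartialOp (M : Type) where
  op : M → M → Option M
  one : M

/-- `x ⊥ y`: the join `x • y` is defined. -/
def PartialOp.Defined {M : Type} (P : PartialOp M) (x y : M) : Prop :=
  (P.op x y).isSome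

/-- The PCM laws: commutativity (including of definedness), unit, and
partial associativity. -/
structure IsPCM {M : Type} (P : PartialOp M) : Prop where
  comm : ∀ x y, P.op x y = P.op y x
  one_op : ∀ x, P.op P.one x = some x
  assoc : ∀ x y z xy w, P.op x y = some xy → P.op xy z = some w →
    ∃ yz, P.op y z = some yz ∧ P.op x yz = some w
/-- A compatibility relation on a PCM. -/
structure IsCompatRel {M : Type} (P : PartialOp M) (R : M → M → Prop) : Prop where
  unitary : R P.one P.one
  symm_iff : ∀ x y, R x y ↔ R y x
  compat : ∀ x y, R x y → (P.op x y).isSome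
  unital : ∀ x y, R x y → R x P.one
  assoc : ∀ x y z xy, R x y → P.op x y = some xy → R xy z →
    R y z ∧ ∃ yz, P.op y z = some yz ∧ R x yz
/-- The two operations recorded in lock histories. -/
inductive LU | L | U deriving DecidableEq

/-- A history: a finite map from positive timestamps to `{L, U}`. -/
abbrev Hist := Finmap (fun _ : ℕ+ => LU)

/-- `last_stamp h = max ({0} ∪ dom h)`. -/
noncomputable def lastStamp (h : Hist) : ℕ := h.keys.sup (fun t => (t : ℕ))

/-- `last_op h` is `h (last_stamp h)` if `last_stamp h ≠ 0`, and `U` otherwise. -/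
noncomputable def lastOp (h : Hist) : LU :=
  if hpos : 0 < lastStamp h then (h.lookup ⟨lastStamp h, hpos⟩).getD LU.U else LU.U

/-- `ω h` holds iff the last operation of `h` is a lock. -/
noncomputable def omega (h : Hist) : Prop := lastOp h = LU.L

/-- `fresh h = 1 + last_stamp h`, as a positive timestamp. -/
noncomputable def freshStamp (h : Hist) : ℕ+ := ⟨lastStamp h + 1, Nat.succ_pos _⟩

/-- `x ⊥_ω y`. -/
noncomputable def sepOmega (x y : Hist) : Prop :=
  (omega x → lastStamp y < lastStamp x) ∧
  (omega y → lastStamp x < lastStamp y) ∧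
  x.Disjoint y

open scoped Classical in
/-- The PCM of histories: disjoint union, with unit the empty history. -/
noncomputable def histOp : PartialOp Hist where
  op x y := if x.Disjoint y then some (x ∪ y) else none
  one := ∅

/-! The last operation of a union of disjoint histories is that of the summand with the larger
last stamp (disjoint histories cannot share a positive last stamp). Hence every `ω`-hypothesis on a
union transfers to one summand, and the required stamp inequalities chain through
`lastStamp (x ∪ y) = max (lastStamp x) (lastStamp y)`. -/

lemma lastStamp_empty : lastStamp ∅ = 0 := by
  simp [lastStamp]

lemma lastStamp_union (x y : Hist) : lastStamp (x ∪ y) = max (lastStamp x) (lastStamp y) := by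
  rw [lastStamp, Finmap.keys_union, Finset.sup_union]
  rfl

lemma lastStamp_pos_of_omega {h : Hist} (hω : omega h) : 0 < lastStamp h := by
  by_contra hc
  simp [omega, lastOp, hc] at hω

lemma not_omega_empty : ¬ omega ∅ := fun hω => by
  simpa [lastStamp_empty] using lastStamp_pos_of_omega hω

lemma lastStamp_mem {h : Hist} (hpos : 0 < lastStamp h) : (⟨lastStamp h, hpos⟩ : ℕ+) ∈ h := by
  have hne : h.keys.Nonempty :=
    Finset.nonempty_iff_ne_empty.mpr fun hempty => by simp [lastStamp, hempty] at hpos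
  obtain ⟨t, ht, hsup⟩ := Finset.exists_mem_eq_sup h.keys hne (fun t => (t : ℕ))
  rw [show (⟨lastStamp h, hpos⟩ : ℕ+) = t from Subtype.ext hsup]
  exact Finmap.mem_keys.mp ht

lemma lastStamp_ne_of_disjoint {x y : Hist} (hd : x.Disjoint y) (hpos : 0 < lastStamp x) :
    lastStamp x ≠ lastStamp y := fun heq => by
  have hpos' : 0 < lastStamp y := heq ▸ hpos
  refine hd _ (lastStamp_mem hpos) ?_
  rw [show (⟨lastStamp x, hpos⟩ : ℕ+) = ⟨lastStamp y, hpos'⟩ from Subtype.ext heq]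
  exact lastStamp_mem hpos'

lemma lastOp_union_of_lt_left {x y : Hist} (hlt : lastStamp y < lastStamp x) :
    lastOp (x ∪ y) = lastOp x := by
  have hpos : 0 < lastStamp x := lt_of_le_of_lt (Nat.zero_le _) hlt
  have hstamp : lastStamp (x ∪ y) = lastStamp x := by
    rw [lastStamp_union, max_eq_left hlt.le]
  unfold lastOp
  rw [hstamp, dif_pos hpos, dif_pos hpos]
  exact congrArg (Option.getD · LU.U) (Finmap.lookup_union_left (lastStamp_mem hpos))

lemma lastOp_union_of_lt_right {x y : Hist} (hd : x.Disjoint y)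
    (hlt : lastStamp x < lastStamp y) : lastOp (x ∪ y) = lastOp y := by
  rw [Finmap.union_comm_of_disjoint hd, lastOp_union_of_lt_left hlt]

lemma omega_union_of_lt_left {x y : Hist} (hlt : lastStamp y < lastStamp x) :
    omega (x ∪ y) ↔ omega x := by
  rw [omega, omega, lastOp_union_of_lt_left hlt]

lemma omega_union_of_lt_right {x y : Hist} (hd : x.Disjoint y)
    (hlt : lastStamp x < lastStamp y) : omega (x ∪ y) ↔ omega y := by
  rw [omega, omega, lastOp_union_of_lt_right hd hlt]

lemma omega_union {x y : Hist} (hd : x.Disjoint y) (hω : omega (x ∪ y)) :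
    omega x ∧ lastStamp y < lastStamp x ∨ omega y ∧ lastStamp x < lastStamp y := by
  rcases lt_trichotomy (lastStamp x) (lastStamp y) with hlt | heq | hgt
  · exact .inr ⟨(omega_union_of_lt_right hd hlt).mp hω, hlt⟩
  · have hpos := lastStamp_pos_of_omega hω
    rw [lastStamp_union, ← heq, max_self] at hpos
    exact absurd heq (lastStamp_ne_of_disjoint hd hpos)
  · exact .inl ⟨(omega_union_of_lt_left hgt).mp hω, hgt⟩

lemma sepOmega_comm {x y : Hist} (h : sepOmega x y) : sepOmega y x :=
  ⟨h.2.1, h.1, h.2.2.symm _ _⟩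

lemma sepOmega_empty_right (x : Hist) : sepOmega x ∅ :=
  ⟨fun hω => lastStamp_empty ▸ lastStamp_pos_of_omega hω, fun hω => absurd hω not_omega_empty,
    (Finmap.disjoint_empty x).symm _ _⟩

lemma sepOmega_assoc {x y z : Hist} (hxy : sepOmega x y) (hxyz : sepOmega (x ∪ y) z) :
    sepOmega x (y ∪ z) ∧ sepOmega y z := by
  obtain ⟨hωx, hωy, hdxy⟩ := hxy
  obtain ⟨hωxy, hωz, hdxyz⟩ := hxyz
  obtain ⟨hdxz, hdyz⟩ := (Finmap.disjoint_union_left x y z).mp hdxyz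
  rw [lastStamp_union] at hωxy hωz
  refine ⟨⟨fun hx => ?_, fun hyz => ?_, (Finmap.disjoint_union_right x y z).mpr ⟨hdxy, hdxz⟩⟩,
    ⟨fun hy => ?_, fun hz => (le_max_right _ _).trans_lt (hωz hz), hdyz⟩⟩
  · have hlt := hωx hx
    have hzx := hωxy ((omega_union_of_lt_left hlt).mpr hx)
    rw [max_eq_left hlt.le] at hzx
    rw [lastStamp_union]
    exact max_lt hlt hzx
  · rw [lastStamp_union]
    rcases omega_union hdyz hyz with ⟨hy, _⟩ | ⟨hz, _⟩
    · exact lt_max_of_lt_left (hωy hy)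
    · exact lt_max_of_lt_right ((le_max_left _ _).trans_lt (hωz hz))
  · have hlt := hωy hy
    simpa only [max_eq_right hlt.le] using hωxy ((omega_union_of_lt_right hdxy hlt).mpr hy)

lemma histOp_op_of_disjoint {x y : Hist} (hd : x.Disjoint y) : histOp.op x y = some (x ∪ y) := by
  simp [histOp, hd]

/-- `⊥_ω` is a compatibility relation on the PCM of histories;
in particular it is associative: if `x ⊥_ω y` and `(x ⊎ y) ⊥_ω z`, then
`x ⊥_ω (y ⊎ z)` and `y ⊥_ω z`. -/
theorem sepOmega_isCompatRel :
    IsCompatRel histOp sepOmega ∧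
    (∀ x y z : Hist, sepOmega x y → sepOmega (x ∪ y) z →
      sepOmega x (y ∪ z) ∧ sepOmega y z) := by
  refine ⟨⟨sepOmega_empty_right ∅, fun _ _ => ⟨sepOmega_comm, sepOmega_comm⟩,
    fun _ _ h => by simp [histOp_op_of_disjoint h.2.2], fun x _ _ => sepOmega_empty_right x,
    fun x y z xy hxy hop hxyz => ?_⟩, fun _ _ _ => sepOmega_assoc⟩
  obtain rfl : xy = x ∪ y := by
    rw [histOp_op_of_disjoint hxy.2.2] at hop
    exact (Option.some_injective _ hop).symm
  obtain ⟨hxyz', hyz⟩ := sepOmega_assoc hxy hxyz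
  exact ⟨hyz, y ∪ z, histOp_op_of_disjoint hyz.2.2, hxyz'⟩
end

section
/- Given a PCM A and a compatibility relation R on A, the set A/R = {x ∈ A | x R 1} forms a PCM with unit 1_A and with the operation x •' y defined to equal x • y when x R y and undefined otherwise. -/
/-- If `x R 1` and `x R y` and `x • y = w`, then `w R 1`. -/
theorem subPCM_aux {A : Type} (PA : PartialOp A) (hA : IsPCM PA)
    (R : A → A → Prop) (hR : IsCompatRel PA R) {x y w : A}
    (hx : R x PA.one) (h : R x y) (hw : PA.op x y = some w) : R w PA.one := by
  have h1x : R PA.one x := (hR.symm_iff _ _).1 hx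
  have := hR.assoc PA.one x y x h1x (hA.one_op x) h
  obtain ⟨-, yz, hyz, h1yz⟩ := this
  rw [hw] at hyz
  cases hyz
  exact (hR.symm_iff _ _).1 h1yz

/-- given a PCM `A` and a compatibility relation `R` on it, the
set `A/R = {x | x R 1}` forms a PCM with unit `1_A` and join
`x •' y = x • y` when `x R y`, undefined otherwise. -/
theorem subPCM_is_PCM {A : Type} (PA : PartialOp A) (hA : IsPCM PA)
    (R : A → A → Prop) (hR : IsCompatRel PA R) :
    ∃ P : PartialOp {x : A // R x PA.one},
      P.one.1 = PA.one ∧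
      (∀ (x y : {x : A // R x PA.one}) (z : {x : A // R x PA.one}),
        P.op x y = some z ↔ (R x.1 y.1 ∧ PA.op x.1 y.1 = some z.1)) ∧
      IsPCM P := by
  classical
  set P : PartialOp {x : A // R x PA.one} := PartialOp.mk
    (fun x y =>
      if h : R x.1 y.1 then
        some ⟨(PA.op x.1 y.1).get (hR.compat _ _ h),
          subPCM_aux PA hA R hR x.2 h (Option.some_get _).symm⟩
      else none)
    ⟨PA.one, hR.unitary⟩ with hP
  have hiff : ∀ (x y z : {x : A // R x PA.one}),
      P.op x y = some z ↔ (R x.1 y.1 ∧ PA.op x.1 y.1 = some z.1) := by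
    intro x y z
    constructor
    · intro hop
      by_cases h : R x.1 y.1
      · rw [hP] at hop
        simp only [h, dif_pos, Option.some.injEq] at hop
        refine ⟨h, ?_⟩
        rw [← hop]
        exact (Option.some_get _).symm
      · rw [hP] at hop; simp [h] at hop
    · rintro ⟨h, hop⟩
      rw [hP]
      simp only [h, dif_pos, Option.some.injEq]
      apply Subtype.ext
      simp [hop]
  have hdef : ∀ (x y : {x : A // R x PA.one}), R x.1 y.1 →
      ∃ z, P.op x y = some z ∧ PA.op x.1 y.1 = some z.1 := by
    intro x y h
    have hsome := hR.compat _ _ h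
    refine ⟨⟨(PA.op x.1 y.1).get hsome,
      subPCM_aux PA hA R hR x.2 h (Option.some_get _).symm⟩, ?_, (Option.some_get _).symm⟩
    exact (hiff _ _ _).2 ⟨h, (Option.some_get _).symm⟩
  refine ⟨P, rfl, hiff, ?_⟩
  constructor
  · intro x y
    by_cases h : R x.1 y.1
    · have h' := (hR.symm_iff _ _).1 h
      obtain ⟨z, hz, hz'⟩ := hdef x y h
      obtain ⟨z2, hz2, hz2'⟩ := hdef y x h'
      rw [hz, hz2]
      have : z.1 = z2.1 := by
        rw [hA.comm x.1 y.1] at hz'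
        rw [hz'] at hz2'; exact (Option.some.injEq _ _ ▸ hz2' : _).symm ▸ rfl
      rw [Subtype.ext this]
    · have h' : ¬ R y.1 x.1 := fun hh => h ((hR.symm_iff _ _).1 hh)
      rw [hP]; simp [h, h']
  · intro x
    have h1x : R PA.one x.1 := (hR.symm_iff _ _).1 x.2
    refine (hiff _ _ _).2 ⟨h1x, hA.one_op x.1⟩
  · intro x y z xy w hxy hw
    obtain ⟨h1, h1'⟩ := (hiff _ _ _).1 hxy
    obtain ⟨h2, h2'⟩ := (hiff _ _ _).1 hw
    obtain ⟨hyz, yzv, hyzv, hxyz⟩ := hR.assoc x.1 y.1 z.1 xy.1 h1 h1' h2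
    obtain ⟨yz', hyz', hxyz'⟩ := hA.assoc x.1 y.1 z.1 xy.1 w.1 h1' h2'
    have heq : yzv = yz' := by rw [hyzv] at hyz'; cases hyz'; rfl
    subst heq
    refine ⟨⟨yzv, subPCM_aux PA hA R hR y.2 hyz hyzv⟩,
      (hiff _ _ _).2 ⟨hyz, hyzv⟩, (hiff _ _ _).2 ⟨hxyz, hxyz'⟩⟩
end

section
/- Given a PCM A and a compatibility relation R on A, let A/R be the PCM with carrier {x ∈ A | x R 1}, unit 1_A, and join x •' y = x • y when x R y (undefined otherwise). Let ι : A/R → A be the inclusion with ⊥_ι the compatibility of A/R, and let ρ : A ⇀ A/R be defined by ρ(a) = a if a R 1 and undefined otherwise, with ⊥_ρ = R. Then ι is a total PCM morphism, ρ is a PCM morphism, and they exhibit A/R as a sub-PCM of A: (1) ρ(ι a) = a for all a ∈ A/R; (2) if b ⊥_ρ 1_A then ι(ρ b) = b; (3) if ρ(x) and ρ(y) are defined and ρ(x) ⊥_{A/R} ρ(y), then x ⊥_ρ y. Moreover R equals ⊥_ρ and equals the compatibility relation of A/R. -/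
/-- A PCM morphism `φ : A ⇀ B` with associated compatibility relation `⊥_φ`:
`φ 1 = 1`, and whenever `x ⊥_φ y`, both `φ x` and `φ y` are defined,
`φ x ⊥_B φ y`, and `φ (x • y) = φ x • φ y`. -/
structure IsPCMMorphism {A B : Type} (PA : PartialOp A) (PB : PartialOp B)
    (φ : A → Option B) (Rφ : A → A → Prop) : Prop where
  compatRel : IsCompatRel PA Rφ
  map_one : φ PA.one = some PB.one
  map_op : ∀ x y, Rφ x y → ∃ bx bY xy bxy,
    φ x = some bx ∧ φ y = some bY ∧ PA.op x y = some xy ∧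
    PB.op bx bY = some bxy ∧ φ xy = some bxy

/-- A PCM morphism is total if its compatibility relation is definedness. -/
def IsTotalPCMMorphism {A B : Type} (PA : PartialOp A) (PB : PartialOp B)
    (φ : A → Option B) (Rφ : A → A → Prop) : Prop :=
  IsPCMMorphism PA PB φ Rφ ∧ ∀ x y, Rφ x y ↔ (PA.op x y).isSome

/-- The inclusion `ι : A/R → A`. -/
def incl {A : Type} (PA : PartialOp A) (R : A → A → Prop) :
    {x : A // R x PA.one} → Option A :=
  fun x => some x.1

open scoped Classical in
/-- The retraction `ρ : A ⇀ A/R`: `ρ a = a` if `a R 1`, undefined otherwise. -/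
noncomputable def retr {A : Type} (PA : PartialOp A) (R : A → A → Prop) :
    A → Option {x : A // R x PA.one} :=
  fun a => if h : R a PA.one then some ⟨a, h⟩ else none

lemma join_mem {A : Type} {PA : PartialOp A} (hA : IsPCM PA) {R : A → A → Prop}
    (hR : IsCompatRel PA R) {x y xy : A} (h : R x y) (hop : PA.op x y = some xy) :
    R xy PA.one := by
  have h1x : R PA.one x := (hR.symm_iff _ _).mp (hR.unital _ _ h)
  obtain ⟨-, xy', hxy', h1xy⟩ := hR.assoc PA.one x y x h1x (hA.one_op x) h
  rw [hop] at hxy'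
  cases hxy'
  exact hR.unital _ _ ((hR.symm_iff _ _).mp h1xy)

open scoped Classical in
noncomputable def subOp {A : Type} (PA : PartialOp A) (hA : IsPCM PA) (R : A → A → Prop)
    (hR : IsCompatRel PA R) : PartialOp {x : A // R x PA.one} where
  op x y := if h : R x.1 y.1 then
    some ⟨(PA.op x.1 y.1).get (hR.compat _ _ h),
      join_mem hA hR h (Option.some_get (hR.compat _ _ h)).symm⟩ else none
  one := ⟨PA.one, hR.unitary⟩

open scoped Classical in
lemma subOp_eq_some {A : Type} (PA : PartialOp A) (hA : IsPCM PA) (R : A → A → Prop)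
    (hR : IsCompatRel PA R) (x y z : {x : A // R x PA.one}) :
    (subOp PA hA R hR).op x y = some z ↔ (R x.1 y.1 ∧ PA.op x.1 y.1 = some z.1) := by
  show (if h : R x.1 y.1 then some (⟨(PA.op x.1 y.1).get (hR.compat _ _ h), join_mem hA hR h (Option.some_get (hR.compat _ _ h)).symm⟩ : {x : A // R x PA.one}) else none) = some z ↔ _
  constructor
  · intro h
    split at h
    · next hxy =>
      cases h
      exact ⟨hxy, (Option.some_get _).symm⟩
    · exact absurd h (by simp)
  · rintro ⟨hxy, hop⟩
    rw [dif_pos hxy]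
    congr 1
    apply Subtype.ext
    simp [Option.get_of_mem _ hop]
open scoped Classical in
lemma subOp_def_iff {A : Type} (PA : PartialOp A) (hA : IsPCM PA) (R : A → A → Prop)
    (hR : IsCompatRel PA R) (x y : {x : A // R x PA.one}) :
    ((subOp PA hA R hR).op x y).isSome ↔ R x.1 y.1 := by
  constructor
  · intro h
    obtain ⟨z, hz⟩ := Option.isSome_iff_exists.mp h
    exact ((subOp_eq_some PA hA R hR x y z).mp hz).1
  · intro h
    show (dite _ _ _ : Option _).isSome
    rw [dif_pos h]; rfl


/-- the sub-PCM `A/R` with its inclusion `ι` (a total PCM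
morphism, whose compatibility relation is the definedness relation of `A/R`)
and retraction `ρ` (a PCM morphism with `⊥_ρ = R`), satisfying the three
sub-PCM conditions; moreover `R` equals `⊥_ρ` and the compatibility
(definedness) relation of `A/R`. -/
theorem subPCM_inclusion_retraction {A : Type} (PA : PartialOp A) (hA : IsPCM PA)
    (R : A → A → Prop) (hR : IsCompatRel PA R) :
    ∃ P : PartialOp {x : A // R x PA.one},
      P.one.1 = PA.one ∧
      (∀ x y z, P.op x y = some z ↔ (R x.1 y.1 ∧ PA.op x.1 y.1 = some z.1)) ∧
      IsPCM P ∧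
      -- ι is a total PCM morphism with `⊥_ι` the compatibility of A/R
      IsTotalPCMMorphism P PA (incl PA R) (fun x y => (P.op x y).isSome) ∧
      -- ρ is a PCM morphism with `⊥_ρ = R`
      IsPCMMorphism PA P (retr PA R) R ∧
      -- (1) ρ (ι a) = a
      (∀ a : {x : A // R x PA.one}, (incl PA R a).bind (retr PA R) = some a) ∧
      -- (2) if b ⊥_ρ 1 then ι (ρ b) = b
      (∀ b : A, R b PA.one → (retr PA R b).bind (incl PA R) = some b) ∧
      -- (3) if ρ x and ρ y are defined and ρ x ⊥_{A/R} ρ y then x ⊥_ρ y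
      (∀ (x y : A) (x' y' : {x : A // R x PA.one}),
        retr PA R x = some x' → retr PA R y = some y' →
        (P.op x' y').isSome → R x y) ∧
      -- R equals the compatibility (definedness) relation of A/R
      (∀ x y : {x : A // R x PA.one}, (P.op x y).isSome ↔ R x.1 y.1) := by
  refine ⟨subOp PA hA R hR, rfl, subOp_eq_some PA hA R hR, ?_, ?_, ?_, ?_, ?_, ?_, ?_⟩
  · -- IsPCM
    set P := subOp PA hA R hR with hP
    have char := subOp_eq_some PA hA R hR
    have key : ∀ x y z, P.op x y = some z → P.op y x = some z := by
      intro x y z h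
      rw [char] at h ⊢
      exact ⟨(hR.symm_iff _ _).mp h.1, (hA.comm _ _) ▸ h.2⟩
    constructor
    · intro x y
      cases h1 : P.op x y with
      | some z => exact (key x y z h1).symm
      | none =>
        cases h2 : P.op y x with
        | none => rfl
        | some z => rw [key y x z h2] at h1; exact absurd h1 (by simp)
    · intro x
      rw [char]
      exact ⟨(hR.symm_iff _ _).mp x.2, hA.one_op x.1⟩
    · intro x y z xy w h1 h2
      rw [char] at h1 h2
      obtain ⟨hRxy, hop1⟩ := h1
      obtain ⟨hRxyz, hop2⟩ := h2
      obtain ⟨hRyz, yz, hopyz, hRxyz'⟩ := hR.assoc x.1 y.1 z.1 xy.1 hRxy hop1 hRxyz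
      obtain ⟨yz', hopyz', hopxyz'⟩ := hA.assoc x.1 y.1 z.1 xy.1 w.1 hop1 hop2
      rw [hopyz] at hopyz'
      cases hopyz'
      refine ⟨⟨yz, join_mem hA hR hRyz hopyz⟩, ?_, ?_⟩
      · rw [char]; exact ⟨hRyz, hopyz⟩
      · rw [char]; exact ⟨hRxyz', hopxyz'⟩
  · -- total morphism ι
    set P := subOp PA hA R hR with hP
    have char := subOp_eq_some PA hA R hR
    have dIff := subOp_def_iff PA hA R hR
    refine ⟨⟨⟨?_, ?_, ?_, ?_, ?_⟩, rfl, ?_⟩, fun x y => Iff.rfl⟩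
    · exact (dIff _ _).mpr hR.unitary
    · intro x y
      rw [dIff, dIff, hR.symm_iff]
    · exact fun x y h => h
    · intro x y h
      exact (dIff _ _).mpr x.2
    · intro x y z xy hxy hopxy hxyz
      rw [char] at hopxy
      obtain ⟨hRxy, hop1⟩ := hopxy
      have hRxyz := (dIff _ _).mp hxyz
      obtain ⟨hRyz, yz, hopyz, hRxyz'⟩ := hR.assoc x.1 y.1 z.1 xy.1 hRxy hop1 hRxyz
      refine ⟨(dIff _ _).mpr hRyz, ⟨yz, join_mem hA hR hRyz hopyz⟩, ?_, (dIff _ _).mpr hRxyz'⟩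
      rw [char]; exact ⟨hRyz, hopyz⟩
    · intro x y h
      obtain ⟨z, hz⟩ := Option.isSome_iff_exists.mp h
      exact ⟨x.1, y.1, z, z.1, rfl, rfl, hz, ((char _ _ _).mp hz).2, rfl⟩
  · -- morphism ρ
    have char := subOp_eq_some PA hA R hR
    refine ⟨hR, ?_, ?_⟩
    · simp only [retr, dif_pos hR.unitary]
      rfl
    · intro x y h
      have hx1 := hR.unital x y h
      have hy1 := hR.unital y x ((hR.symm_iff _ _).mp h)
      obtain ⟨xy, hopxy⟩ := Option.isSome_iff_exists.mp (hR.compat _ _ h)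
      refine ⟨⟨x, hx1⟩, ⟨y, hy1⟩, xy, ⟨xy, join_mem hA hR h hopxy⟩, ?_, ?_, hopxy, ?_, ?_⟩
      · simp [retr, hx1]
      · simp [retr, hy1]
      · rw [char]; exact ⟨h, hopxy⟩
      · simp [retr, join_mem hA hR h hopxy]
  · intro a
    simp [incl, retr, a.2]
  · intro b hb
    simp [incl, retr, hb]
  · intro x y x' y' hx hy hdef
    have hd := (subOp_def_iff PA hA R hR x' y').mp hdef
    simp only [retr] at hx hy
    split at hx
    · cases hx
      split at hy
      · cases hy; exact hd
      · exact absurd hy (by simp)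
    · exact absurd hx (by simp)
  · exact subOp_def_iff PA hA R hR
end

section
/- Let f, g : A ⇀ B be PCM morphisms with compatibility relations ⊥_f, ⊥_g. Define (f ∔ g)(x) = f(x) •_B g(x) (defined when f(x) and g(x) are defined and f(x) ⊥_B g(x)), and define x ⊥_{f∔g} y iff (x ⊥_f y and x ⊥_g y and f(x • y) ⊥_B g(x • y)). Then ⊥_{f∔g} is a compatibility relation on A, and f ∔ g together with ⊥_{f∔g} is a PCM morphism from A to B. -/
/-- The join of morphisms: `(f ∔ g) x = f x • g x`, defined when `f x`,
`g x` are defined and compatible in `B`. -/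
def pcmJoinFun {A B : Type} (PB : PartialOp B) (f g : A → Option B) :
    A → Option B :=
  fun x => (f x).bind fun a => (g x).bind fun b => PB.op a b

/-- `x ⊥_{f∔g} y` iff `x ⊥_f y`, `x ⊥_g y`, and `f (x•y) ⊥_B g (x•y)`. -/
def pcmJoinRel {A B : Type} (PA : PartialOp A) (PB : PartialOp B)
    (f g : A → Option B) (Rf Rg : A → A → Prop) : A → A → Prop :=
  fun x y => Rf x y ∧ Rg x y ∧
    ∃ xy fxy gxy, PA.op x y = some xy ∧ f xy = some fxy ∧ g xy = some gxy ∧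
      (PB.op fxy gxy).isSome

lemma PCM.comm_some {M : Type} {P : PartialOp M} (hP : IsPCM P) {x y : M} {w : M}
    (h : P.op x y = some w) : P.op y x = some w := by
  rw [hP.comm]; exact h

lemma PCM.assoc_rev {M : Type} {P : PartialOp M} (hP : IsPCM P) {x y z yz w : M}
    (h1 : P.op y z = some yz) (h2 : P.op x yz = some w) :
    ∃ xy, P.op x y = some xy ∧ P.op xy z = some w := by
  obtain ⟨yx, hyx, hzyx⟩ := hP.assoc z y x yz w (PCM.comm_some hP h1) (PCM.comm_some hP h2)
  exact ⟨yx, PCM.comm_some hP hyx, PCM.comm_some hP hzyx⟩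

lemma PCM.exchange {M : Type} {P : PartialOp M} (hP : IsPCM P) {a b c d ab cd w : M}
    (hab : P.op a b = some ab) (hcd : P.op c d = some cd)
    (hw : P.op ab cd = some w) :
    ∃ ac bd, P.op a c = some ac ∧ P.op b d = some bd ∧ P.op ac bd = some w := by
  obtain ⟨u, hu, hau⟩ := hP.assoc a b cd ab w hab hw
  obtain ⟨bd, hbd, hbdc⟩ := PCM.assoc_rev hP (PCM.comm_some hP hcd) hu
  obtain ⟨ac, hac, hacbd⟩ := PCM.assoc_rev hP (PCM.comm_some hP hbdc) hau
  exact ⟨ac, bd, hac, hbd, hacbd⟩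

/-- the join of two PCM morphisms is a PCM morphism, and its
compatibility relation is a compatibility relation. -/
theorem pcm_morphism_join {A B : Type}
    (PA : PartialOp A) (PB : PartialOp B) (hA : IsPCM PA) (hB : IsPCM PB)
    (f g : A → Option B) (Rf Rg : A → A → Prop)
    (hf : IsPCMMorphism PA PB f Rf) (hg : IsPCMMorphism PA PB g Rg) :
    IsCompatRel PA (pcmJoinRel PA PB f g Rf Rg) ∧
    IsPCMMorphism PA PB (pcmJoinFun PB f g) (pcmJoinRel PA PB f g Rf Rg) := by
  -- From `x ⊥ y` in the join relation, extract all the data of the join morphism.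
  have key : ∀ x y, pcmJoinRel PA PB f g Rf Rg x y →
      ∃ fx gx fy gy xy S T W, f x = some fx ∧ g x = some gx ∧ f y = some fy ∧ g y = some gy ∧
        PA.op x y = some xy ∧ PB.op fx gx = some S ∧ PB.op fy gy = some T ∧
        PB.op S T = some W ∧ pcmJoinFun PB f g xy = some W := by
    rintro x y ⟨hfxy, hgxy, xy, fxy, gxy, hxyA, hfv, hgv, hd⟩
    obtain ⟨fx, fy, xy1, Fxy, hfx, hfy, hxy1, hF, hFv⟩ := hf.map_op x y hfxy
    obtain ⟨gx, gy, xy2, Gxy, hgx, hgy, hxy2, hG, hGv⟩ := hg.map_op x y hgxy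
    rw [hxyA, Option.some_inj] at hxy1 hxy2
    subst hxy1; subst hxy2
    rw [hFv, Option.some_inj] at hfv; subst hfv
    rw [hGv, Option.some_inj] at hgv; subst hgv
    obtain ⟨W, hW⟩ := Option.isSome_iff_exists.mp hd
    obtain ⟨S, T, hS, hT, hST⟩ := PCM.exchange hB hF hG hW
    exact ⟨fx, gx, fy, gy, xy, S, T, W, hfx, hgx, hfy, hgy, hxyA, hS, hT, hST,
      by simp [pcmJoinFun, hFv, hGv, hW]⟩
  have hR : IsCompatRel PA (pcmJoinRel PA PB f g Rf Rg) := by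
    constructor
    · exact ⟨hf.compatRel.unitary, hg.compatRel.unitary, PA.one, PB.one, PB.one,
        hA.one_op _, hf.map_one, hg.map_one, by simp [hB.one_op]⟩
    · intro x y
      unfold pcmJoinRel
      rw [hf.compatRel.symm_iff x y, hg.compatRel.symm_iff x y, hA.comm x y]
    · rintro x y ⟨h1, -, -⟩
      exact hf.compatRel.compat x y h1
    · rintro x y hxyR
      obtain ⟨fx, gx, fy, gy, xy, S, T, W, hfx, hgx, hfy, hgy, hxyA, hS, hT, hST, hjoin⟩ :=
        key x y hxyR
      refine ⟨hf.compatRel.unital x y hxyR.1, hg.compatRel.unital x y hxyR.2.1,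
        x, fx, gx, ?_, hfx, hgx, ?_⟩
      · rw [hA.comm]; exact hA.one_op x
      · rw [hS]; rfl
    · rintro x y z xy0 hxyR hxy0 hxyzR
      obtain ⟨hfxy, hgxy, xy, fxy, gxy, hxyA, hfv, hgv, hd⟩ := hxyR
      rw [hxyA, Option.some_inj] at hxy0; subst hxy0
      obtain ⟨hfxyz, hgxyz, w, fw, gw, hwA, hfwv, hgwv, hdw⟩ := hxyzR
      obtain ⟨hfyz, yz, hyzA, hfxyz'⟩ := hf.compatRel.assoc x y z xy hfxy hxyA hfxyz
      obtain ⟨hgyz, yz2, hyzA2, hgxyz'⟩ := hg.compatRel.assoc x y z xy hgxy hxyA hgxyz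
      rw [hyzA, Option.some_inj] at hyzA2; subst hyzA2
      -- B-level data
      obtain ⟨fx, fy, xy1, Fxy, hfx, hfy, hxy1, hF, hFv⟩ := hf.map_op x y hfxy
      obtain ⟨gx, gy, xy2, Gxy, hgx, hgy, hxy2, hG, hGv⟩ := hg.map_op x y hgxy
      rw [hxyA, Option.some_inj] at hxy1 hxy2; subst hxy1; subst hxy2
      obtain ⟨Fxy2, fz, w1, Fw, hFxy2, hfz, hw1, hFzop, hFwv⟩ := hf.map_op xy z hfxyz
      obtain ⟨Gxy2, gz, w2, Gw, hGxy2, hgz, hw2, hGzop, hGwv⟩ := hg.map_op xy z hgxyz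
      rw [hwA, Option.some_inj] at hw1 hw2; subst hw1; subst hw2
      rw [hFv, Option.some_inj] at hFxy2; subst hFxy2
      rw [hGv, Option.some_inj] at hGxy2; subst hGxy2
      rw [hFwv, Option.some_inj] at hfwv; subst hfwv
      rw [hGwv, Option.some_inj] at hgwv; subst hgwv
      obtain ⟨W, hW⟩ := Option.isSome_iff_exists.mp hdw
      obtain ⟨Pp, Q, hP, hQ, hPQ⟩ := PCM.exchange hB hFzop hGzop hW
      obtain ⟨S, T, hS, hT, hST⟩ := PCM.exchange hB hF hG hP
      obtain ⟨U, hTQ, hSU⟩ := hB.assoc S T Q Pp W hST hPQ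
      obtain ⟨Fyz', Gyz', hFyz', hGyz', hUU⟩ := PCM.exchange hB hT hQ hTQ
      -- data for y ⊥ z
      obtain ⟨fy2, fz2, yz1, Fyz, hfy2, hfz2, hyz1, hFyzop, hFyzv⟩ := hf.map_op y z hfyz
      obtain ⟨gy2, gz2, yz2', Gyz, hgy2, hgz2, hyz2, hGyzop, hGyzv⟩ := hg.map_op y z hgyz
      rw [hyzA, Option.some_inj] at hyz1 hyz2; subst hyz1; subst hyz2
      rw [hfy, Option.some_inj] at hfy2; subst hfy2
      rw [hfz, Option.some_inj] at hfz2; subst hfz2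
      rw [hgy, Option.some_inj] at hgy2; subst hgy2
      rw [hgz, Option.some_inj] at hgz2; subst hgz2
      rw [hFyzop, Option.some_inj] at hFyz'; subst hFyz'
      rw [hGyzop, Option.some_inj] at hGyz'; subst hGyz'
      constructor
      · exact ⟨hfyz, hgyz, yz, Fyz, Gyz, hyzA, hFyzv, hGyzv, by rw [hUU]; rfl⟩
      · obtain ⟨yz3, hyz3, hxyz3⟩ := hA.assoc x y z xy w hxyA hwA
        rw [hyzA, Option.some_inj] at hyz3; subst hyz3
        exact ⟨yz, hyzA, hfxyz', hgxyz', w, Fw, Gw, hxyz3, hFwv, hGwv, hdw⟩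
  refine ⟨hR, hR, ?_, ?_⟩
  · simp [pcmJoinFun, hf.map_one, hg.map_one, hB.one_op]
  · intro x y hxyR
    obtain ⟨fx, gx, fy, gy, xy, S, T, W, hfx, hgx, hfy, hgy, hxyA, hS, hT, hST, hjoin⟩ :=
      key x y hxyR
    exact ⟨S, T, xy, W, by simp [pcmJoinFun, hfx, hgx, hS],
      by simp [pcmJoinFun, hfy, hgy, hT], hxyA, hST, hjoin⟩
end

section
/- Let f : A ⇀ B be a PCM morphism with compatibility relation ⊥_f. Then the kernel relation defined by x (ker f) y iff (x ⊥_f y and f(x) = f(y) = 1_B) is a compatibility relation on A. -/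
/-- The kernel relation of a PCM morphism: `x (ker f) y` iff `x ⊥_f y` and
`f x = f y = 1_B`. -/
def pcmKerRel {A B : Type} (PB : PartialOp B) (f : A → Option B)
    (Rf : A → A → Prop) : A → A → Prop :=
  fun x y => Rf x y ∧ f x = some PB.one ∧ f y = some PB.one

/-- the kernel of a PCM morphism is a compatibility relation. -/
theorem pcm_kernel_compatRel {A B : Type}
    (PA : PartialOp A) (PB : PartialOp B) (hA : IsPCM PA) (hB : IsPCM PB)
    (f : A → Option B) (Rf : A → A → Prop)
    (hf : IsPCMMorphism PA PB f Rf) :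
    IsCompatRel PA (pcmKerRel PB f Rf) := by
  obtain ⟨hc, h1, hop⟩ := hf
  constructor
  · exact ⟨hc.unitary, h1, h1⟩
  · intro x y
    constructor
    · rintro ⟨hr, hx, hy⟩; exact ⟨(hc.symm_iff x y).mp hr, hy, hx⟩
    · rintro ⟨hr, hx, hy⟩; exact ⟨(hc.symm_iff y x).mp hr, hy, hx⟩
  · rintro x y ⟨hr, -, -⟩; exact hc.compat x y hr
  · rintro x y ⟨hr, hx, -⟩; exact ⟨hc.unital x y hr, hx, h1⟩
  · rintro x y z xy ⟨hxy, hfx, hfy⟩ hop_xy ⟨hxyz, hfxy, hfz⟩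
    obtain ⟨hyz, yz, hopyz, hxyz'⟩ := hc.assoc x y z xy hxy hop_xy hxyz
    obtain ⟨by', bz, yz', byz, hby, hbz, hopyz', hPB, hfyz⟩ := hop y z hyz
    rw [hfy] at hby; rw [hfz] at hbz
    cases hby; cases hbz
    rw [hopyz] at hopyz'; cases hopyz'
    rw [hB.one_op] at hPB; cases hPB
    exact ⟨⟨hyz, hfy, hfz⟩, yz, hopyz, ⟨hxyz', hfx, hfyz⟩⟩
end

section
/- Let f, g : A ⇀ B be PCM morphisms with compatibility relations ⊥_f, ⊥_g. Then the equalizer relation defined by x (eql f g) y iff (x ⊥_f y and x ⊥_g y and f(x) = g(x) and f(y) = g(y)) is a compatibility relation on A. -/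
/-- The equalizer relation of two PCM morphisms: `x (eql f g) y` iff
`x ⊥_f y`, `x ⊥_g y`, `f x = g x` and `f y = g y`. -/
def pcmEqlRel {A B : Type} (f g : A → Option B)
    (Rf Rg : A → A → Prop) : A → A → Prop :=
  fun x y => Rf x y ∧ Rg x y ∧ f x = g x ∧ f y = g y

/-- the equalizer of two PCM morphisms is a compatibility
relation. -/
theorem pcm_equalizer_compatRel {A B : Type}
    (PA : PartialOp A) (PB : PartialOp B) (hA : IsPCM PA) (hB : IsPCM PB)
    (f g : A → Option B) (Rf Rg : A → A → Prop)
    (hf : IsPCMMorphism PA PB f Rf) (hg : IsPCMMorphism PA PB g Rg) :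
    IsCompatRel PA (pcmEqlRel f g Rf Rg) := by
  constructor
  · exact ⟨hf.compatRel.unitary, hg.compatRel.unitary,
      hf.map_one.trans hg.map_one.symm, hf.map_one.trans hg.map_one.symm⟩
  · rintro x y
    constructor <;> rintro ⟨h1, h2, h3, h4⟩
    · exact ⟨(hf.compatRel.symm_iff x y).mp h1, (hg.compatRel.symm_iff x y).mp h2, h4, h3⟩
    · exact ⟨(hf.compatRel.symm_iff y x).mp h1, (hg.compatRel.symm_iff y x).mp h2, h4, h3⟩
  · rintro x y ⟨h1, _, _, _⟩
    exact hf.compatRel.compat x y h1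
  · rintro x y ⟨h1, h2, h3, _⟩
    exact ⟨hf.compatRel.unital x y h1, hg.compatRel.unital x y h2,
      h3, hf.map_one.trans hg.map_one.symm⟩
  · rintro x y z xy ⟨h1, h2, hfx, hfy⟩ hop ⟨h1', h2', hfxy, hfz⟩
    obtain ⟨hRfyz, yz, hyz, hRfxyz⟩ := hf.compatRel.assoc x y z xy h1 hop h1'
    obtain ⟨hRgyz, yz', hyz', hRgxyz⟩ := hg.compatRel.assoc x y z xy h2 hop h2'
    rw [hyz] at hyz'
    injection hyz' with e; subst e
    -- f yz = g yz
    obtain ⟨by1, bz1, yz1, byz1, hfy1, hfz1, hyz1, hop1, hfyz1⟩ := hf.map_op y z hRfyz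
    obtain ⟨by2, bz2, yz2, byz2, hgy1, hgz1, hyz2, hop2, hgyz2⟩ := hg.map_op y z hRgyz
    rw [hyz] at hyz1 hyz2
    injection hyz1 with e1; subst e1
    injection hyz2 with e2; subst e2
    rw [hfy] at hfy1; rw [hgy1] at hfy1
    rw [hfz] at hfz1; rw [hgz1] at hfz1
    injection hfy1 with e3; injection hfz1 with e4
    subst e3; subst e4
    rw [hop1] at hop2
    injection hop2 with e5; subst e5
    have heq : f yz = g yz := hfyz1.trans hgyz2.symm
    exact ⟨⟨hRfyz, hRgyz, hfy, hfz⟩, yz, hyz, hRfxyz, hRgxyz, hfx, heq⟩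
end

section
/- Let x and y be histories with x ⊥_ω y and ω x. Then ω(x ⊎ y) holds and last_stamp(x ⊎ y) = last_stamp x; consequently, there is no timestamp t with t ≥ last_stamp(x ⊎ y) and (x ⊎ y)(t) = U. -/
lemma le_lastStamp_of_mem {h : Hist} {t : ℕ+} (ht : t ∈ h) : (t : ℕ) ≤ lastStamp h :=
  Finset.le_sup (Finmap.mem_keys.mpr ht)

lemma omega_iff_exists_lookup {h : Hist} :
    omega h ↔ ∃ t : ℕ+, (t : ℕ) = lastStamp h ∧ h.lookup t = some LU.L := by
  unfold omega lastOp
  split_ifs with hpos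
  · constructor
    · intro hL
      refine ⟨⟨lastStamp h, hpos⟩, rfl, ?_⟩
      cases hl : h.lookup ⟨lastStamp h, hpos⟩ <;> simp_all
    · rintro ⟨t, hts, ht⟩
      obtain rfl : t = ⟨lastStamp h, hpos⟩ := PNat.coe_injective hts
      simp [ht]
  · simp only [false_iff, not_exists, not_and]
    intro t ht
    exact absurd (ht ▸ t.pos) hpos

lemma omega_union_of_lastStamp_lt {x y : Hist} (hx : omega x) (hyx : lastStamp y < lastStamp x) :
    omega (x ∪ y) := by
  obtain ⟨t, ht, hxt⟩ := omega_iff_exists_lookup.mp hx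
  refine omega_iff_exists_lookup.mpr ⟨t, ?_, ?_⟩
  · rw [lastStamp_union, max_eq_left hyx.le, ht]
  · rw [Finmap.lookup_union_left (Finmap.mem_of_lookup_eq_some hxt), hxt]

lemma lookup_ne_U_of_omega {h : Hist} (hh : omega h) {t : ℕ+} (ht : lastStamp h ≤ t) :
    h.lookup t ≠ some LU.U := by
  obtain ⟨s, hs, hhs⟩ := omega_iff_exists_lookup.mp hh
  intro hhtU
  have hts : t = s := PNat.coe_injective <|
    (le_lastStamp_of_mem (Finmap.mem_of_lookup_eq_some hhtU)).antisymm ht |>.trans hs.symm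
  rw [hts, hhs] at hhtU
  cases hhtU

/-- if `x ⊥_ω y` and `ω x`, then `ω (x ⊎ y)` and
`last_stamp (x ⊎ y) = last_stamp x`; consequently there is no timestamp
`t ≥ last_stamp (x ⊎ y)` with `(x ⊎ y) t = U`. -/
theorem sepOmega_union_omega (x y : Hist) (hxy : sepOmega x y) (hx : omega x) :
    omega (x ∪ y) ∧ lastStamp (x ∪ y) = lastStamp x ∧
    ∀ t : ℕ+, lastStamp (x ∪ y) ≤ (t : ℕ) → (x ∪ y).lookup t ≠ some LU.U := by
  have hyx : lastStamp y < lastStamp x := hxy.1 hx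
  have hunion : omega (x ∪ y) := omega_union_of_lastStamp_lt hx hyx
  exact ⟨hunion, by rw [lastStamp_union, max_eq_left hyx.le],
    fun _ ht => lookup_ne_U_of_omega hunion ht⟩
end

section
/- Let x and y be histories with x ⊥ y such that alternate(x ⊎ y) holds and ω(x ⊎ y) fails. Then x ⊎ (fresh(x ⊎ y) ↦ L) is defined (the fresh timestamp is outside dom x), it is disjoint from y, and alternate((x ⊎ (fresh(x ⊎ y) ↦ L)) ⊎ y) holds. That is, the locking transition of the Spin resource preserves the alternation invariant of the combined history. -/
/-- `alternate h`: the domain of `h` is `{1, …, last_stamp h}` and `h` maps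
odd timestamps to `L` and even timestamps to `U`. -/
noncomputable def alternate (h : Hist) : Prop :=
  (∀ t : ℕ+, t ∈ h ↔ (t : ℕ) ≤ lastStamp h) ∧
  (∀ t : ℕ+, t ∈ h → h.lookup t = some (if Odd (t : ℕ) then LU.L else LU.U))

/-- the locking transition preserves the alternation invariant
of the combined history: if `x ⊥ y`, `alternate (x ⊎ y)` holds and
`ω (x ⊎ y)` fails, then `x ⊎ (fresh (x ⊎ y) ↦ L)` is defined, it is disjoint
from `y`, and `alternate ((x ⊎ (fresh (x ⊎ y) ↦ L)) ⊎ y)` holds. -/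
theorem lock_preserves_alternate (x y : Hist) (hxy : x.Disjoint y)
    (halt : alternate (x ∪ y)) (hω : ¬ omega (x ∪ y)) :
    x.Disjoint (Finmap.singleton (freshStamp (x ∪ y)) LU.L) ∧
    (x ∪ Finmap.singleton (freshStamp (x ∪ y)) LU.L).Disjoint y ∧
    alternate ((x ∪ Finmap.singleton (freshStamp (x ∪ y)) LU.L) ∪ y) := by
  set h := x ∪ y with hh
  set n := lastStamp h with hn
  set f : ℕ+ := freshStamp h with hf
  have hfval : (f : ℕ) = n + 1 := rfl
  obtain ⟨hmem, hlook⟩ := halt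
  have hfnot : f ∉ h := by
    intro hm
    have := (hmem f).mp hm
    omega
  have hfnotx : f ∉ x := fun hm => hfnot (Finmap.mem_union.mpr (Or.inl hm))
  have hfnoty : f ∉ y := fun hm => hfnot (Finmap.mem_union.mpr (Or.inr hm))
  -- n is even
  have hneven : ¬ Odd n := by
    intro hodd
    have hpos : 0 < n := by
      rcases hodd with ⟨k, hk⟩; omega
    have hmemn : (⟨n, hpos⟩ : ℕ+) ∈ h := (hmem _).mpr le_rfl
    have := hlook _ hmemn
    apply hω
    unfold omega lastOp
    rw [dif_pos hpos, this]
    simp [hodd]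
  have hdisj1 : x.Disjoint (Finmap.singleton f LU.L) := by
    intro t ht hts
    rw [Finmap.mem_singleton] at hts
    exact hfnotx (hts ▸ ht)
  refine ⟨hdisj1, ?_, ?_⟩
  · intro t ht hty
    rcases Finmap.mem_union.mp ht with h1 | h1
    · exact hxy t h1 hty
    · rw [Finmap.mem_singleton] at h1
      exact hfnoty (h1 ▸ hty)
  · set H : Hist := (x ∪ Finmap.singleton f LU.L) ∪ y with hH
    have hmemH : ∀ t : ℕ+, t ∈ H ↔ (t : ℕ) ≤ n + 1 := by
      intro t
      constructor
      · intro ht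
        rcases Finmap.mem_union.mp ht with h1 | h1
        · rcases Finmap.mem_union.mp h1 with h2 | h2
          · have := (hmem t).mp (Finmap.mem_union.mpr (Or.inl h2)); omega
          · rw [Finmap.mem_singleton] at h2; subst h2; omega
        · have := (hmem t).mp (Finmap.mem_union.mpr (Or.inr h1)); omega
      · intro ht
        rcases Nat.lt_or_ge (t : ℕ) (n + 1) with h1 | h1
        · have : t ∈ h := (hmem t).mpr (by omega)
          rcases Finmap.mem_union.mp this with h2 | h2
          · exact Finmap.mem_union.mpr (Or.inl (Finmap.mem_union.mpr (Or.inl h2)))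
          · exact Finmap.mem_union.mpr (Or.inr h2)
        · have : t = f := by
            apply PNat.coe_injective
            rw [hfval]; omega
          subst this
          exact Finmap.mem_union.mpr (Or.inl (Finmap.mem_union.mpr
            (Or.inr (by rw [Finmap.mem_singleton]))))
    have hlsH : lastStamp H = n + 1 := by
      apply le_antisymm
      · apply Finset.sup_le
        intro t ht
        exact (hmemH t).mp (Finmap.mem_keys.mp ht)
      · have : f ∈ H := (hmemH f).mpr (by omega)
        exact Finset.le_sup (f := fun t : ℕ+ => (t : ℕ)) (Finmap.mem_keys.mpr this)
    constructor
    · intro t; rw [hlsH]; exact hmemH t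
    · intro t ht
      rcases Nat.lt_or_ge (t : ℕ) (n + 1) with h1 | h1
      · have hth : t ∈ h := (hmem t).mpr (by omega)
        have hlt := hlook t hth
        rcases Finmap.mem_union.mp hth with h2 | h2
        · rw [Finmap.lookup_union_left (Finmap.mem_union.mpr (Or.inl h2)),
            Finmap.lookup_union_left h2, ← Finmap.lookup_union_left h2 (s₂ := y), hlt]
        · have htx : t ∉ x := fun hc => hxy t hc h2
          have hts : t ∉ (Finmap.singleton f LU.L : Hist) := by
            rw [Finmap.mem_singleton]
            intro hc; exact hfnoty (hc ▸ h2)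
          have htxs : t ∉ x ∪ Finmap.singleton f LU.L := fun hc => by
            rcases Finmap.mem_union.mp hc with h3 | h3
            exacts [htx h3, hts h3]
          rw [Finmap.lookup_union_right htxs, ← Finmap.lookup_union_right htx, hlt]
      · have : t = f := by
          apply PNat.coe_injective; rw [hfval]
          have := (hmemH t).mp ht; omega
        subst this
        have hfodd : Odd ((f : ℕ)) := by
          rw [hfval]; rcases Nat.even_or_odd n with he | ho
          · exact he.add_one
          · exact absurd ho hneven
        rw [if_pos hfodd]
        have : f ∈ x ∪ Finmap.singleton f LU.L :=
          Finmap.mem_union.mpr (Or.inr (by rw [Finmap.mem_singleton]))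
        rw [Finmap.lookup_union_left this, Finmap.lookup_union_right hfnotx,
          Finmap.lookup_singleton_eq]
end

section
/- Let x and y be histories with x ⊥ y such that alternate(x ⊎ y) holds and ω(x ⊎ y) holds. Then x ⊎ (fresh(x ⊎ y) ↦ U) is defined (the fresh timestamp is outside dom x), it is disjoint from y, and alternate((x ⊎ (fresh(x ⊎ y) ↦ U)) ⊎ y) holds. That is, the unlocking transition of the Spin resource preserves the alternation invariant of the combined history. -/
/-- the unlocking transition preserves the alternation
invariant of the combined history: if `x ⊥ y`, `alternate (x ⊎ y)` holds and
`ω (x ⊎ y)` holds, then `x ⊎ (fresh (x ⊎ y) ↦ U)` is defined, it is disjoint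
from `y`, and `alternate ((x ⊎ (fresh (x ⊎ y) ↦ U)) ⊎ y)` holds. -/
theorem unlock_preserves_alternate (x y : Hist) (hxy : x.Disjoint y)
    (halt : alternate (x ∪ y)) (hω : omega (x ∪ y)) :
    x.Disjoint (Finmap.singleton (freshStamp (x ∪ y)) LU.U) ∧
    (x ∪ Finmap.singleton (freshStamp (x ∪ y)) LU.U).Disjoint y ∧
    alternate ((x ∪ Finmap.singleton (freshStamp (x ∪ y)) LU.U) ∪ y) := by
  obtain ⟨hmem, hlook⟩ := halt
  set h := x ∪ y with hh
  set n := lastStamp h with hn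
  set f := freshStamp h with hf
  have hfval : (f : ℕ) = n + 1 := rfl
  -- f is not in h
  have hfh : f ∉ h := by
    intro hc
    have := (hmem f).mp hc
    omega
  have hfx : f ∉ x := fun hc => hfh (Finmap.mem_union.mpr (Or.inl hc))
  have hfy : f ∉ y := fun hc => hfh (Finmap.mem_union.mpr (Or.inr hc))
  -- n is positive and odd
  have hnpos : 0 < n := by
    by_contra hc
    unfold omega lastOp at hω
    rw [dif_neg hc] at hω
    exact LU.noConfusion hω
  have hodd : Odd n := by
    have hmemn : (⟨n, hnpos⟩ : ℕ+) ∈ h := (hmem _).mpr (le_refl n)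
    unfold omega lastOp at hω
    rw [dif_pos hnpos, hlook _ hmemn] at hω
    by_contra hc
    have hω' : (if Odd n then LU.L else LU.U) = LU.L := hω
    rw [if_neg hc] at hω'
    exact LU.noConfusion hω'
  have hnodd : ¬ Odd (n + 1) := by
    rcases hodd with ⟨k, hk⟩
    rintro ⟨m, hm⟩
    omega
  have hd1 : x.Disjoint (Finmap.singleton f LU.U) := by
    intro t ht hts
    rw [Finmap.mem_singleton] at hts
    exact hfx (hts ▸ ht)
  refine ⟨hd1, ?_, ?_, ?_⟩
  · intro t ht hty
    rcases Finmap.mem_union.mp ht with h1 | h1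
    · exact hxy t h1 hty
    · rw [Finmap.mem_singleton] at h1
      exact hfy (h1 ▸ hty)
  · -- membership characterization; first compute lastStamp of the new map
    have hmem' : ∀ t : ℕ+, t ∈ (x ∪ Finmap.singleton f LU.U) ∪ y ↔ (t : ℕ) ≤ n + 1 := by
      intro t
      rw [Finmap.mem_union, Finmap.mem_union, Finmap.mem_singleton]
      constructor
      · rintro ((h1 | h1) | h1)
        · exact le_trans ((hmem t).mp (Finmap.mem_union.mpr (Or.inl h1))) (by omega)
        · rw [h1]; exact le_refl _
        · exact le_trans ((hmem t).mp (Finmap.mem_union.mpr (Or.inr h1))) (by omega)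
      · intro hle
        rcases Nat.lt_or_ge (t : ℕ) (n + 1) with h1 | h1
        · have := (hmem t).mpr (by omega)
          rcases Finmap.mem_union.mp this with h2 | h2
          · exact Or.inl (Or.inl h2)
          · exact Or.inr h2
        · have : t = f := by
            apply PNat.coe_injective
            rw [hfval]; omega
          exact Or.inl (Or.inr this)
    have hls : lastStamp ((x ∪ Finmap.singleton f LU.U) ∪ y) = n + 1 := by
      apply le_antisymm
      · apply Finset.sup_le
        intro t ht
        exact (hmem' t).mp (Finmap.mem_keys.mp ht)
      · have : f ∈ (x ∪ Finmap.singleton f LU.U) ∪ y :=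
          Finmap.mem_union.mpr (Or.inl (Finmap.mem_union.mpr
            (Or.inr ((Finmap.mem_singleton f f LU.U).mpr rfl))))
        calc n + 1 = (f : ℕ) := rfl
          _ ≤ _ := Finset.le_sup (Finmap.mem_keys.mpr this)
      ;
    rw [hls]
    exact hmem'
  · intro t ht
    rcases Finmap.mem_union.mp ht with h1 | h1
    · rw [Finmap.lookup_union_left h1]
      rcases Finmap.mem_union.mp h1 with h2 | h2
      · rw [Finmap.lookup_union_left h2, ← Finmap.lookup_union_left (s₂ := y) h2]
        exact hlook t (Finmap.mem_union.mpr (Or.inl h2))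
      · rw [Finmap.mem_singleton] at h2
        subst h2
        rw [Finmap.lookup_union_right hfx, Finmap.lookup_singleton_eq]
        rw [if_neg (by exact_mod_cast hnodd)]
    · have htx : t ∉ x := fun hc => hxy t hc h1
      have hts : t ∉ (Finmap.singleton f LU.U : Hist) := by
        rw [Finmap.mem_singleton]
        exact fun hc => hfy (hc ▸ h1)
      have htxs : t ∉ x ∪ Finmap.singleton f LU.U := fun hc =>
        (Finmap.mem_union.mp hc).elim htx hts
      rw [Finmap.lookup_union_right htxs, ← Finmap.lookup_union_right htx]
      exact hlook t (Finmap.mem_union.mpr (Or.inr h1))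
end

section
/- Consider tuples (τ_s, τ_o, π_s, π_o, α_s, α_o) where τ_s, τ_o are histories, π_s, π_o ∈ ℕ, and α_s, α_o ∈ O. Say Inv holds of such a tuple iff: ω τ_s ↔ (α_s = own); ω τ_o ↔ (α_o = own); π_s = 1 if α_s = own and π_s = 0 otherwise; π_o = 1 if α_o = own and π_o = 0 otherwise; and τ_s ⊥_ω τ_o. Suppose Inv holds of (τ_s, τ_o, π_s, π_o, α_s, α_o) and the coupled lock/open transition fires: ω(τ_s ⊎ τ_o) fails, α_s = ōwn, and the post-state is τ_s' = τ_s ⊎ (fresh(τ_s ⊎ τ_o) ↦ L), π_s' = π_s + 1, α_s' = own, with τ_o, π_o, α_o unchanged. Then τ_s' is disjoint from τ_o, and Inv holds of the post-state; in particular τ_s' ⊥_ω τ_o. -/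
/-- Ownership values: `own` and `ōwn` (not owned). -/
inductive Own | own | nown deriving DecidableEq
/-- The invariant `SpinCSLInv` of the combined Spin/CSLX resource on the tuple
`(τ_s, τ_o, π_s, π_o, α_s, α_o)`. -/
noncomputable def SpinCSLInv (τs τo : Hist) (πs πo : ℕ) (αs αo : Own) : Prop :=
  (omega τs ↔ αs = Own.own) ∧
  (omega τo ↔ αo = Own.own) ∧
  (πs = if αs = Own.own then 1 else 0) ∧
  (πo = if αo = Own.own then 1 else 0) ∧
  sepOmega τs τo

lemma notMem_of_lastStamp_lt {h : Hist} {t : ℕ+} (ht : lastStamp h < t) : t ∉ h :=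
  fun hmem => (le_lastStamp_of_mem hmem).not_gt ht

lemma lastStamp_singleton (t : ℕ+) (v : LU) : lastStamp (Finmap.singleton t v) = t := by
  simp [lastStamp, Finmap.keys_singleton]

lemma lastOp_eq_lookup {h : Hist} {t : ℕ+} (ht : lastStamp h = t) :
    lastOp h = (h.lookup t).getD LU.U := by
  have hpos : 0 < lastStamp h := ht ▸ t.pos
  have hkey : (⟨lastStamp h, hpos⟩ : ℕ+) = t := PNat.eq ht
  rw [lastOp, dif_pos hpos, hkey]

lemma omega_singleton_L (t : ℕ+) : omega (Finmap.singleton t LU.L) := by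
  rw [omega, lastOp_eq_lookup (lastStamp_singleton t LU.L), Finmap.lookup_singleton_eq]
  rfl

lemma omega_union_right {x y : Hist} (hy : omega y) (hlt : lastStamp x < lastStamp y) :
    omega (x ∪ y) := by
  set t : ℕ+ := ⟨lastStamp y, by omega⟩
  have hunion : lastStamp (x ∪ y) = t := by
    rw [lastStamp_union]
    exact max_eq_right hlt.le
  rw [omega, lastOp_eq_lookup hunion, Finmap.lookup_union_right (notMem_of_lastStamp_lt hlt)]
  exact (lastOp_eq_lookup rfl).symm.trans hy

lemma not_omega_right_of_sepOmega {x y : Hist} (hsep : sepOmega x y) (hxy : ¬ omega (x ∪ y)) :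
    ¬ omega y :=
  fun hy => hxy (omega_union_right hy (hsep.2.1 hy))

lemma omega_union_singleton_L {x : Hist} {t : ℕ+} (ht : lastStamp x < t) :
    omega (x ∪ Finmap.singleton t LU.L) :=
  omega_union_right (omega_singleton_L t) (by rwa [lastStamp_singleton])

lemma lastStamp_lt_freshStamp_union_left (x y : Hist) : lastStamp x < freshStamp (x ∪ y) := by
  simp only [freshStamp, PNat.mk_coe, lastStamp_union]
  omega

lemma lastStamp_lt_freshStamp_union_right (x y : Hist) : lastStamp y < freshStamp (x ∪ y) := by
  simp only [freshStamp, PNat.mk_coe, lastStamp_union]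
  omega

lemma sepOmega_union_freshStamp_L {x y : Hist} (hxy : x.Disjoint y) (hy : ¬ omega y) :
    sepOmega (x ∪ Finmap.singleton (freshStamp (x ∪ y)) LU.L) y := by
  have hfresh_y := lastStamp_lt_freshStamp_union_right x y
  refine ⟨fun _ => ?_, fun h => absurd h hy, ?_⟩
  · rw [lastStamp_union, lastStamp_singleton]
    exact lt_max_of_lt_right hfresh_y
  · refine (Finmap.disjoint_union_left _ _ _).mpr ⟨hxy, fun t ht => ?_⟩
    rw [Finmap.mem_singleton] at ht
    exact ht ▸ notMem_of_lastStamp_lt hfresh_y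

/-- the coupled lock/open transition preserves `SpinCSLInv`:
if `SpinCSLInv` holds, `ω (τ_s ⊎ τ_o)` fails and `α_s = ōwn`, then the post-state
`τ_s' = τ_s ⊎ (fresh (τ_s ⊎ τ_o) ↦ L)`, `π_s' = π_s + 1`, `α_s' = own`
(with `τ_o`, `π_o`, `α_o` unchanged) has `τ_s'` disjoint from `τ_o` and
satisfies `SpinCSLInv`; in particular `τ_s' ⊥_ω τ_o`. -/
theorem lock_open_preserves_Inv (τs τo : Hist) (πs πo : ℕ) (αs αo : Own)
    (hInv : SpinCSLInv τs τo πs πo αs αo)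
    (hω : ¬ omega (τs ∪ τo)) (hα : αs = Own.nown) :
    (τs ∪ Finmap.singleton (freshStamp (τs ∪ τo)) LU.L).Disjoint τo ∧
    SpinCSLInv (τs ∪ Finmap.singleton (freshStamp (τs ∪ τo)) LU.L) τo (πs + 1) πo Own.own αo ∧
    sepOmega (τs ∪ Finmap.singleton (freshStamp (τs ∪ τo)) LU.L) τo := by
  obtain ⟨-, hωo, hπs, hπo, hsep⟩ := hInv
  have hsep' := sepOmega_union_freshStamp_L hsep.2.2 (not_omega_right_of_sepOmega hsep hω)
  have hlocked := omega_union_singleton_L (lastStamp_lt_freshStamp_union_left τs τo)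
  have hπs' : πs + 1 = 1 := by simp [hπs, hα]
  exact ⟨hsep'.2.2, ⟨iff_of_true hlocked rfl, hωo, by simpa using hπs', hπo, hsep'⟩, hsep'⟩
end

section
/- Define ♯_L h to be the number of timestamps t ∈ dom h with h(t) = L. Fix n ∈ ℕ and a history h. For tuples (τ_s, τ_o, κ_s, κ_o) with τ_s, τ_o disjoint histories and κ_s, κ_o ∈ ℕ, define I₁ to hold iff ♯_L h ≤ ♯_L τ_s and κ_s = n + (♯_L τ_s − ♯_L h). Then I₁ is preserved by the coupled transition lock_tr ⋈ incr_tr 1: if I₁ holds, ω(τ_s ⊎ τ_o) fails, τ_s' = τ_s ⊎ (fresh(τ_s ⊎ τ_o) ↦ L), and κ_s' = κ_s + 1 (with τ_o, κ_o unchanged), then I₁ holds of (τ_s', τ_o, κ_s', κ_o). Moreover I₁ is preserved by the coupled transition unlock_tr ⋈ id (which adds a U entry to τ_s and leaves κ_s unchanged), and by any step that changes only τ_o and κ_o. -/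
/-- `♯_L h`: the number of timestamps `t ∈ dom h` with `h t = L`. -/
noncomputable def countL (h : Hist) : ℕ :=
  (h.keys.filter (fun t => h.lookup t = some LU.L)).card

/-- The simulation `I₁` on tuples `(τ_s, τ_o, κ_s, κ_o)`:
`♯_L h ≤ ♯_L τ_s` and `κ_s = n + (♯_L τ_s − ♯_L h)`. -/
noncomputable def I₁ (n : ℕ) (h : Hist) (τs τo : Hist) (κs κo : ℕ) : Prop :=
  countL h ≤ countL τs ∧ κs = n + (countL τs - countL h)

lemma fresh_not_mem (τs τo : Hist) : freshStamp (τs ∪ τo) ∉ τs := by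
  intro hm
  have hk : freshStamp (τs ∪ τo) ∈ (τs ∪ τo).keys := by
    rw [Finmap.mem_keys]; exact Finmap.mem_union.2 (Or.inl hm)
  have := Finset.le_sup (f := fun t : ℕ+ => (t : ℕ)) hk
  have h2 : lastStamp (τs ∪ τo) + 1 ≤ lastStamp (τs ∪ τo) := this
  omega

lemma countL_union_single (τs τo : Hist) (v : LU) :
    countL (τs ∪ Finmap.singleton (freshStamp (τs ∪ τo)) v)
      = countL τs + (if v = LU.L then 1 else 0) := by
  set t := freshStamp (τs ∪ τo) with ht
  have hnm : t ∉ τs := fresh_not_mem τs τo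
  have hknm : t ∉ τs.keys := by rwa [Finmap.mem_keys]
  unfold countL
  rw [Finmap.keys_union, Finmap.keys_singleton]
  rw [Finset.filter_union]
  have h1 : (τs.keys.filter (fun k => (τs ∪ Finmap.singleton t v).lookup k = some LU.L))
      = τs.keys.filter (fun k => τs.lookup k = some LU.L) := by
    apply Finset.filter_congr
    intro k hk
    rw [Finmap.lookup_union_left (Finmap.mem_keys.1 hk)]
  rw [h1]
  have h2 : (({t} : Finset ℕ+).filter (fun k => (τs ∪ Finmap.singleton t v).lookup k = some LU.L))
      = if v = LU.L then ({t} : Finset ℕ+) else ∅ := by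
    rw [Finset.filter_singleton]
    rw [Finmap.lookup_union_right hnm, Finmap.lookup_singleton_eq]
    cases v <;> simp
  rw [h2]
  rw [Finset.card_union_of_disjoint]
  · cases v <;> simp
  · cases v <;> simp [Finset.disjoint_singleton_right, hknm]


/-- `I₁` is preserved by the coupled transition
`lock_tr ⋈ incr_tr 1`, by `unlock_tr ⋈ id`, and by any step that changes
only the other-components `τ_o` and `κ_o`. -/
theorem I₁_simulation (n : ℕ) (h : Hist) :
    -- lock_tr ⋈ incr_tr 1
    (∀ (τs τo : Hist) (κs κo : ℕ), τs.Disjoint τo →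
      I₁ n h τs τo κs κo → ¬ omega (τs ∪ τo) →
      I₁ n h (τs ∪ Finmap.singleton (freshStamp (τs ∪ τo)) LU.L) τo (κs + 1) κo) ∧
    -- unlock_tr ⋈ id
    (∀ (τs τo : Hist) (κs κo : ℕ), τs.Disjoint τo →
      I₁ n h τs τo κs κo → omega (τs ∪ τo) →
      I₁ n h (τs ∪ Finmap.singleton (freshStamp (τs ∪ τo)) LU.U) τo κs κo) ∧
    -- environment steps changing only τ_o and κ_o
    (∀ (τs τo τo' : Hist) (κs κo κo' : ℕ),
      I₁ n h τs τo κs κo → I₁ n h τs τo' κs κo') := by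
  refine ⟨?_, ?_, ?_⟩
  · intro τs τo κs κo _ hI _
    have hc := countL_union_single τs τo LU.L
    simp only [if_true, eq_self_iff_true] at hc
    obtain ⟨h1, h2⟩ := hI
    refine ⟨?_, ?_⟩ <;> rw [hc] <;> omega
  · intro τs τo κs κo _ hI _
    have hc := countL_union_single τs τo LU.U
    rw [if_neg (by intro hx; cases hx)] at hc
    obtain ⟨h1, h2⟩ := hI
    refine ⟨?_, ?_⟩ <;> rw [hc] <;> omega
  · intro τs τo τo' κs κo κo' hI
    exact hI
end
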